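/- arXiv:2001.07584 — 2 statements merged into one kernel-verified Lean document; each statement's English description precedes it below -/
import Mathlib

section
/- If two segmentations Σ and Σ' of Ω have the same χ-flavored multisegment, then f_Σ and f_{Σ'} lie in the same G_χ-orbit on V. -/
open Matrix

noncomputable section

/-- The indexing set `Ω = {(i,j) : 1 ≤ i ≤ m, 1 ≤ j ≤ v_i}` for the standard basis vectors of
`⊕ ℂ^{v_i}`; levels are indexed by `Fin (m'+1)` (so `m = m'+1`) and `d` is the dimension
vector (with `d (Fin.last m') = n`). -/
abbrev QOmega (m' : ℕ) (d : Fin (m' + 1) → ℕ) := Σ i : Fin (m' + 1), Fin (d i)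

/-- A point of `V = ⊕_{i=1}^{m-1} Hom(ℂ^{v_i}, ℂ^{v_{i+1}})`, as a family of matrices. -/
abbrev QRep (m' : ℕ) (d : Fin (m' + 1) → ℕ) :=
  ∀ i : Fin m', Matrix (Fin (d i.succ)) (Fin (d i.castSucc)) ℂ

/-- An element of `GL_{v_1} × ⋯ × GL_{v_{m-1}} × GL_n`. -/
abbrev QGroup (m' : ℕ) (d : Fin (m' + 1) → ℕ) := ∀ i : Fin (m' + 1), GL (Fin (d i)) ℂ

/-- The base-change action of the group on the space of quiver representations. -/
def qAct {m' : ℕ} {d : Fin (m' + 1) → ℕ} (g : QGroup m' d) (f : QRep m' d) : QRep m' d :=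
  fun i => ((g i.succ : Matrix (Fin (d i.succ)) (Fin (d i.succ)) ℂ)) * f i *
    (((g i.castSucc)⁻¹ : GL (Fin (d i.castSucc)) ℂ) : Matrix _ _ ℂ)

/-- Membership in the parabolic `P_χ ⊆ GL_n`: the entries `g_{kl}` with `χ_k > χ_l` vanish. -/
def InParabolic {N : ℕ} (χ : Fin N → ℤ) (A : Matrix (Fin N) (Fin N) ℂ) : Prop :=
  ∀ k l : Fin N, χ l < χ k → A k l = 0

/-- The set of levels occurring in a subset `S ⊆ Ω`. -/
def levelsOf {m' : ℕ} {d : Fin (m' + 1) → ℕ} (S : Set (QOmega m' d)) : Set (Fin (m' + 1)) :=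
  {i | ∃ j : Fin (d i), (⟨i, j⟩ : QOmega m' d) ∈ S}

/-- A subsegment of `Ω`: a set of the form `{(k,j_k),(k+1,j_{k+1}),…,(ℓ,j_ℓ)}`, i.e. a
nonempty subset with at most one element at each level whose set of levels is an interval. -/
def IsSubsegment {m' : ℕ} {d : Fin (m' + 1) → ℕ} (S : Set (QOmega m' d)) : Prop :=
  S.Nonempty ∧
  (∀ (i : Fin (m' + 1)) (j j' : Fin (d i)),
    (⟨i, j⟩ : QOmega m' d) ∈ S → (⟨i, j'⟩ : QOmega m' d) ∈ S → j = j') ∧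
  (∀ i₁ i₂ i₃ : Fin (m' + 1), i₁ ∈ levelsOf S → i₂ ∈ levelsOf S →
    i₁ ≤ i₃ → i₃ ≤ i₂ → i₃ ∈ levelsOf S)

/-- A segmentation of `Ω`: a partition of `Ω` into subsegments. -/
def IsSegmentation {m' : ℕ} {d : Fin (m' + 1) → ℕ} (P : Set (Set (QOmega m' d))) : Prop :=
  (∀ S ∈ P, IsSubsegment S) ∧ ∀ x : QOmega m' d, ∃! S, S ∈ P ∧ x ∈ S

open Classical in
/-- The quiver representation `f_Σ` attached to a segmentation: `f(b_{i,j}) = b_{i+1,j'}` if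
`(i,j)` and `(i+1,j')` lie in a common subsegment, and `f(b_{i,j}) = 0` otherwise. -/
def segRep {m' : ℕ} {d : Fin (m' + 1) → ℕ} (P : Set (Set (QOmega m' d))) : QRep m' d :=
  fun i => Matrix.of fun j' j =>
    if ∃ S ∈ P, (⟨i.castSucc, j⟩ : QOmega m' d) ∈ S ∧ (⟨i.succ, j'⟩ : QOmega m' d) ∈ S
    then (1 : ℂ) else 0

/-- Two segmentations define the same `χ`-flavored multisegment: there is a bijection between
their subsegments matching the underlying segments, and matching subsegments ending at the top
level only when the corresponding flavors (entries of `χ`) agree. -/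
def SameMultisegment {m' : ℕ} {d : Fin (m' + 1) → ℕ} (χ : Fin (d (Fin.last m')) → ℤ)
    (P P' : Set (Set (QOmega m' d))) : Prop :=
  ∃ φ : P ≃ P', ∀ S : P,
    levelsOf (S : Set (QOmega m' d)) = levelsOf ((φ S : Set (QOmega m' d))) ∧
    ∀ j j' : Fin (d (Fin.last m')),
      (⟨Fin.last m', j⟩ : QOmega m' d) ∈ (S : Set (QOmega m' d)) →
      (⟨Fin.last m', j'⟩ : QOmega m' d) ∈ ((φ S : Set (QOmega m' d))) → χ j = χ j'

/-- `f` and `f'` lie in the same `G_χ = P_χ × G_0` orbit. -/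
def SameOrbit {m' : ℕ} {d : Fin (m' + 1) → ℕ} (χ : Fin (d (Fin.last m')) → ℤ)
    (f f' : QRep m' d) : Prop :=
  ∃ g : QGroup m' d,
    InParabolic χ ((g (Fin.last m') : Matrix (Fin (d (Fin.last m'))) (Fin (d (Fin.last m'))) ℂ)) ∧
    qAct g f = f'

/-!
A bijection between the subsegments of `Σ` and `Σ'` that preserves their sets of levels induces,
at every level `i`, a permutation of the basis `b_{i,•}`: the level-`i` vector of a subsegment goes
to the level-`i` vector of its partner. The corresponding permutation matrices conjugate `f_Σ`
into `f_{Σ'}`, and at the top level the permutation preserves the flavors `χ`, so its matrix lies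
in `P_χ`.
-/

section PermutationAction

variable {m' : ℕ} {d : Fin (m' + 1) → ℕ}

def QGroup.ofPerms (e : ∀ i, Equiv.Perm (Fin (d i))) : QGroup m' d :=
  fun i => (permMatrixHom (n := Fin (d i)) (R := ℂ)).toHomUnits (e i)

/- `qAct` elaborates its products with the `HMul` instance of `CStarMatrix`; restating them with
that of `Matrix` lets the `Matrix` and `PEquiv` lemmas rewrite them. -/
theorem qAct_apply (g : QGroup m' d) (f : QRep m' d) (i : Fin m') :
    qAct g f i = (g i.succ : Matrix (Fin (d i.succ)) (Fin (d i.succ)) ℂ) * f i *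
      (((g i.castSucc)⁻¹ : GL (Fin (d i.castSucc)) ℂ) :
        Matrix (Fin (d i.castSucc)) (Fin (d i.castSucc)) ℂ) :=
  rfl

theorem qAct_ofPerms_apply (e : ∀ i, Equiv.Perm (Fin (d i))) (f : QRep m' d) (i : Fin m')
    (a : Fin (d i.succ)) (b : Fin (d i.castSucc)) :
    qAct (QGroup.ofPerms e) f i (e i.succ a) (e i.castSucc b) = f i a b := by
  rw [qAct_apply, QGroup.ofPerms, QGroup.ofPerms, ← map_inv, MonoidHom.coe_toHomUnits,
    MonoidHom.coe_toHomUnits, permMatrixHom_apply, permMatrixHom_apply, inv_inv,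
    Equiv.Perm.permMatrix, Equiv.Perm.permMatrix, PEquiv.toMatrix_toPEquiv_mul,
    PEquiv.mul_toMatrix_toPEquiv]
  simp

theorem qAct_ofPerms_segRep (e : ∀ i, Equiv.Perm (Fin (d i)))
    {P P' : Set (Set (QOmega m' d))} (φ : P ≃ P')
    (he : ∀ (S : P) (i : Fin (m' + 1)) (j : Fin (d i)),
      (⟨i, j⟩ : QOmega m' d) ∈ (S : Set (QOmega m' d)) ↔ ⟨i, e i j⟩ ∈ (φ S : Set (QOmega m' d))) :
    qAct (QGroup.ofPerms e) (segRep P) = segRep P' := by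
  classical
  funext i
  ext a b
  rw [← (e i.succ).apply_symm_apply a, ← (e i.castSucc).apply_symm_apply b, qAct_ofPerms_apply]
  simp only [segRep, of_apply]
  refine if_congr ⟨?_, ?_⟩ rfl rfl
  · rintro ⟨S, hS, hb, ha⟩
    exact ⟨φ ⟨S, hS⟩, (φ ⟨S, hS⟩).2, (he ⟨S, hS⟩ _ _).1 hb, (he ⟨S, hS⟩ _ _).1 ha⟩
  · rintro ⟨S', hS', hb, ha⟩
    have hS : φ (φ.symm ⟨S', hS'⟩) = ⟨S', hS'⟩ := φ.apply_symm_apply _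
    refine ⟨φ.symm ⟨S', hS'⟩, (φ.symm ⟨S', hS'⟩).2, (he _ _ _).2 ?_, (he _ _ _).2 ?_⟩ <;>
      rwa [hS]

theorem inParabolic_permMatrixHom {N : ℕ} {χ : Fin N → ℤ} {σ : Equiv.Perm (Fin N)}
    (hσ : ∀ k, χ (σ k) = χ k) : InParabolic χ (permMatrixHom σ) := by
  intro k l hlt
  rw [permMatrixHom_apply, Equiv.Perm.permMatrix, PEquiv.toMatrix_toPEquiv_apply,
    Pi.single_apply, if_neg]
  rintro rfl
  rw [← hσ (σ⁻¹ k), Equiv.Perm.coe_inv, Equiv.apply_symm_apply] at hlt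
  exact lt_irrefl _ hlt

end PermutationAction

namespace IsSegmentation

variable {m' : ℕ} {d : Fin (m' + 1) → ℕ} {P P' : Set (Set (QOmega m' d))}

def part (hP : IsSegmentation P) (x : QOmega m' d) : P :=
  ⟨(hP.2 x).exists.choose, (hP.2 x).exists.choose_spec.1⟩

theorem mem_part (hP : IsSegmentation P) (x : QOmega m' d) : x ∈ (hP.part x : Set (QOmega m' d)) :=
  (hP.2 x).exists.choose_spec.2

theorem part_eq_of_mem (hP : IsSegmentation P) {x : QOmega m' d} {S : P}
    (hx : x ∈ (S : Set (QOmega m' d))) : hP.part x = S :=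
  Subtype.ext <| (hP.2 x).unique ⟨(hP.part x).2, hP.mem_part x⟩ ⟨S.2, hx⟩

theorem eq_of_mem_of_mem (hP : IsSegmentation P) {S : P} {i : Fin (m' + 1)} {j j' : Fin (d i)}
    (hj : (⟨i, j⟩ : QOmega m' d) ∈ (S : Set (QOmega m' d)))
    (hj' : (⟨i, j'⟩ : QOmega m' d) ∈ (S : Set (QOmega m' d))) : j = j' :=
  (hP.1 S S.2).2.1 i j j' hj hj'

end IsSegmentation

section LevelMatching

variable {m' : ℕ} {d : Fin (m' + 1) → ℕ} {P P' : Set (Set (QOmega m' d))}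

def PreservesLevels (φ : P ≃ P') : Prop :=
  ∀ S : P, levelsOf (S : Set (QOmega m' d)) = levelsOf (φ S : Set (QOmega m' d))

theorem PreservesLevels.symm {φ : P ≃ P'} (hφ : PreservesLevels φ) : PreservesLevels φ.symm :=
  fun S' => by rw [hφ (φ.symm S'), φ.apply_symm_apply]

theorem PreservesLevels.exists_mem {φ : P ≃ P'} (hφ : PreservesLevels φ) {S : P}
    {i : Fin (m' + 1)} {j : Fin (d i)} (hj : (⟨i, j⟩ : QOmega m' d) ∈ (S : Set (QOmega m' d))) :
    ∃ j' : Fin (d i), (⟨i, j'⟩ : QOmega m' d) ∈ (φ S : Set (QOmega m' d)) :=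
  show i ∈ levelsOf (φ S : Set (QOmega m' d)) from hφ S ▸ ⟨j, hj⟩

def levelMap (hP : IsSegmentation P) (φ : P ≃ P') (hφ : PreservesLevels φ) (i : Fin (m' + 1))
    (j : Fin (d i)) : Fin (d i) :=
  (hφ.exists_mem (hP.mem_part ⟨i, j⟩)).choose

theorem mem_levelMap (hP : IsSegmentation P) (φ : P ≃ P') (hφ : PreservesLevels φ)
    (i : Fin (m' + 1)) (j : Fin (d i)) :
    (⟨i, levelMap hP φ hφ i j⟩ : QOmega m' d) ∈ (φ (hP.part ⟨i, j⟩) : Set (QOmega m' d)) :=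
  (hφ.exists_mem (hP.mem_part ⟨i, j⟩)).choose_spec

theorem mem_iff_mem_levelMap (hP : IsSegmentation P) (hP' : IsSegmentation P') (φ : P ≃ P')
    (hφ : PreservesLevels φ) (S : P) (i : Fin (m' + 1)) (j : Fin (d i)) :
    (⟨i, j⟩ : QOmega m' d) ∈ (S : Set (QOmega m' d)) ↔
      ⟨i, levelMap hP φ hφ i j⟩ ∈ (φ S : Set (QOmega m' d)) := by
  constructor
  · intro hj
    rw [← hP.part_eq_of_mem hj]
    exact mem_levelMap hP φ hφ i j
  · intro hj
    have : φ S = φ (hP.part ⟨i, j⟩) :=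
      (hP'.part_eq_of_mem hj).symm.trans (hP'.part_eq_of_mem (mem_levelMap hP φ hφ i j))
    rw [φ.injective this]
    exact hP.mem_part _

theorem levelMap_symm_levelMap (hP : IsSegmentation P) (hP' : IsSegmentation P') (φ : P ≃ P')
    (hφ : PreservesLevels φ) (i : Fin (m' + 1)) (j : Fin (d i)) :
    levelMap hP' φ.symm hφ.symm i (levelMap hP φ hφ i j) = j := by
  have h := (mem_iff_mem_levelMap hP' hP φ.symm hφ.symm _ i _).1 (mem_levelMap hP φ hφ i j)
  rw [φ.symm_apply_apply] at h
  exact hP.eq_of_mem_of_mem h (hP.mem_part _)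

def levelPerm (hP : IsSegmentation P) (hP' : IsSegmentation P') (φ : P ≃ P')
    (hφ : PreservesLevels φ) (i : Fin (m' + 1)) : Equiv.Perm (Fin (d i)) where
  toFun := levelMap hP φ hφ i
  invFun := levelMap hP' φ.symm hφ.symm i
  left_inv := levelMap_symm_levelMap hP hP' φ hφ i
  right_inv := levelMap_symm_levelMap hP' hP φ.symm hφ.symm i

end LevelMatching

theorem sameMultisegment_implies_sameOrbit_general (m' : ℕ) (d : Fin (m' + 1) → ℕ)
    (χ : Fin (d (Fin.last m')) → ℤ)
    (P P' : Set (Set (QOmega m' d)))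
    (hP : IsSegmentation P) (hP' : IsSegmentation P')
    (hsame : SameMultisegment χ P P') :
    SameOrbit χ (segRep P) (segRep P') := by
  obtain ⟨φ, hφ⟩ := hsame
  have hlev : PreservesLevels φ := fun S => (hφ S).1
  refine ⟨QGroup.ofPerms (levelPerm hP hP' φ hlev), inParabolic_permMatrixHom fun j => ?_,
    qAct_ofPerms_segRep _ φ (mem_iff_mem_levelMap hP hP' φ hlev)⟩
  exact ((hφ _).2 _ _ (hP.mem_part _) (mem_levelMap hP φ hlev _ j)).symm

/-- If two segmentations of `Ω` have the same `χ`-flavored multisegment, then the associated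
points `f_Σ`, `f_{Σ'}` lie in the same `G_χ`-orbit on `V`. -/
theorem sameMultisegment_implies_sameOrbit (m' : ℕ) (hm : 1 ≤ m') (d : Fin (m' + 1) → ℕ)
    (χ : Fin (d (Fin.last m')) → ℤ) (hχ : Monotone χ)
    (P P' : Set (Set (QOmega m' d)))
    (hP : IsSegmentation P) (hP' : IsSegmentation P')
    (hsame : SameMultisegment χ P P') :
    SameOrbit χ (segRep P) (segRep P') :=
  sameMultisegment_implies_sameOrbit_general m' d χ P P' hP hP' hsame

end
end

section
/- Let Σ be a segmentation of Ω and write f_{Σ,k;1} = f_{Σ,k−1}∘⋯∘f_{Σ,1} : ℂ^{v_1} → ℂ^{v_k}. Then for each 1 ≤ k < m, the rank of the restriction of f_{Σ,k;1} to ker f_{Σ,k+1;1} equals the number of subsegments of Σ of the form {(1,j_1),(2,j_2),…,(k,j_k)} (i.e., starting at level 1 and ending at level k). Moreover, for every p ∈ ℤ, dim (f_{Σ,m;1})^{−1}(F_p) = dim ker f_{Σ,m;1} + #{subsegments of Σ of the form {(1,j_1),…,(m,j_m)} with χ_{j_m} ≤ p}, where F_p = span{e_j : χ_j ≤ p} ⊆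 ℂ^n. -/
/-!
Each `f_{Σ,i}` is a partial permutation matrix, and so is the composite `f_{Σ,K;1}`: it sends
`e_j` to `e_{j'}` when `(1,j)` and `(K,j')` lie in a common subsegment, and to `0` otherwise.
Hence its kernel and the preimage of the coordinate subspace `F_p` are coordinate subspaces of
`ℂ^{v_1}`, cut out by the `j` whose subsegment reaches level `K` (resp. reaches level `m` with
flavor `> p`). Both formulas thereby become counts of indices `j`, and a subsegment starting at
level `1` is determined by its point `(1,j)`.
-/

open Matrix

noncomputable section

/-- The composite `f_{k;1} = f_{k-1} ∘ ⋯ ∘ f_1 : ℂ^{v_1} → ℂ^{v_k}` (as a matrix). -/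
def qComp {m' : ℕ} {d : Fin (m' + 1) → ℕ} (f : QRep m' d) :
    (k : ℕ) → (hk : k ≤ m') →
      Matrix (Fin (d ⟨k, Nat.lt_succ_of_le hk⟩)) (Fin (d ⟨0, Nat.succ_pos m'⟩)) ℂ
  | 0, _ => 1
  | k + 1, hk =>
      (show Matrix (Fin (d ⟨k + 1, Nat.lt_succ_of_le hk⟩))
          (Fin (d ⟨k, Nat.lt_succ_of_le (Nat.le_of_succ_le hk)⟩)) ℂ from f ⟨k, hk⟩) *
        qComp f k (Nat.le_of_succ_le hk)

/-- The coordinate subspace `F_p = span{e_j : χ_j ≤ p} ⊆ ℂ^n`. -/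
def coordF {N : ℕ} (χ : Fin N → ℤ) (p : ℤ) : Submodule ℂ (Fin N → ℂ) :=
  Submodule.span ℂ {x : Fin N → ℂ | ∃ j : Fin N, χ j ≤ p ∧ x = Pi.single j 1}

open LinearMap (ker proj)
open Module (finrank)

section IndicatorMatrix

variable {l m n α : Type*}

open Classical in
def indicatorMatrix [Zero α] [One α] (R : m → n → Prop) : Matrix m n α :=
  of fun i j => if R i j then 1 else 0

theorem indicatorMatrix_eq_one [DecidableEq n] [Zero α] [One α] :
    indicatorMatrix (α := α) (fun i j : n => i = j) = 1 := by
  ext i j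
  simp [indicatorMatrix, one_apply]

theorem indicatorMatrix_mul [NonAssocSemiring α] [Fintype m] {R : l → m → Prop}
    {R' : m → n → Prop} (huniq : ∀ i k j₁ j₂, R i j₁ → R' j₁ k → R i j₂ → R' j₂ k → j₁ = j₂) :
    -- the ascription selects `Matrix`'s product; otherwise `CStarMatrix`'s instance is found
    indicatorMatrix (α := α) R * (indicatorMatrix R' : Matrix m n α) =
      indicatorMatrix fun i k => ∃ j, R i j ∧ R' j k := by
  classical
  ext i k
  simp only [Matrix.mul_apply, indicatorMatrix, of_apply, ite_zero_mul_ite_zero, mul_one]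
  split_ifs with h
  · obtain ⟨j, hj⟩ := h
    rw [Finset.sum_eq_single j (fun j₂ _ hj₂ => if_neg fun h₂ =>
      hj₂ (huniq i k j₂ j h₂.1 h₂.2 hj.1 hj.2)) (by simp), if_pos hj]
  · exact Finset.sum_eq_zero fun j _ => if_neg fun hj => h ⟨j, hj⟩

theorem indicatorMatrix_mulVec_apply [NonAssocSemiring α] [Fintype n] {R : m → n → Prop}
    (huniq : ∀ i j₁ j₂, R i j₁ → R i j₂ → j₁ = j₂) (x : n → α)
    {i : m} {j : n} (h : R i j) : (indicatorMatrix R *ᵥ x) i = x j := by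
  classical
  rw [mulVec, dotProduct, Finset.sum_eq_single j (fun j₂ _ hj₂ => ?_) (by simp)]
  · simp [indicatorMatrix, h]
  · simp only [indicatorMatrix, of_apply, ite_mul, one_mul, zero_mul, ite_eq_right_iff]
    exact fun h₂ => absurd (huniq i j₂ j h₂ h) hj₂

theorem indicatorMatrix_mulVec_apply_of_forall_not [NonAssocSemiring α] [Fintype n]
    {R : m → n → Prop} (x : n → α) {i : m} (h : ∀ j, ¬R i j) :
    (indicatorMatrix R *ᵥ x) i = 0 := by
  simp [mulVec, dotProduct, indicatorMatrix, h]

theorem comap_toLin'_indicatorMatrix [CommSemiring α] [Fintype n] [DecidableEq n]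
    {R : m → n → Prop} (huniq : ∀ i j₁ j₂, R i j₁ → R i j₂ → j₁ = j₂) (t : Set m) :
    (⨅ i ∈ t, ker (proj i : (m → α) →ₗ[α] α)).comap (toLin' (indicatorMatrix R)) =
      ⨅ j ∈ {j | ∃ i ∈ t, R i j}, ker (proj j) := by
  ext x
  simp only [Submodule.mem_comap, Submodule.mem_iInf, LinearMap.mem_ker, LinearMap.proj_apply,
    toLin'_apply, Set.mem_ofPred_eq, forall_exists_index, and_imp]
  constructor
  · intro hx j i hi hij
    rw [← indicatorMatrix_mulVec_apply huniq x hij]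
    exact hx i hi
  · intro hx i hi
    by_cases h : ∃ j, R i j
    · obtain ⟨j, hij⟩ := h
      rw [indicatorMatrix_mulVec_apply huniq x hij]
      exact hx j i hi hij
    · exact indicatorMatrix_mulVec_apply_of_forall_not x (not_exists.1 h)

theorem ker_toLin'_indicatorMatrix [CommSemiring α] [Fintype n] [DecidableEq n]
    {R : m → n → Prop} (huniq : ∀ i j₁ j₂, R i j₁ → R i j₂ → j₁ = j₂) :
    ker (toLin' (indicatorMatrix (α := α) R)) = ⨅ j ∈ {j | ∃ i, R i j}, ker (proj j) := by
  simpa [LinearMap.iInf_ker_proj] using comap_toLin'_indicatorMatrix (α := α) huniq Set.univ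

end IndicatorMatrix

section CoordinateSubspaces

variable {ι α : Type*}

theorem span_single_one_eq_iInf_ker_proj [Semiring α] [Fintype ι] [DecidableEq ι] (s : Set ι) :
    Submodule.span α {x : ι → α | ∃ j ∈ s, x = Pi.single j 1} = ⨅ j ∈ sᶜ, ker (proj j) := by
  rw [← LinearMap.iSup_range_single_eq_iInf_ker_proj α (fun _ => α) isCompl_compl s.toFinite]
  refine le_antisymm (Submodule.span_le.2 ?_) (iSup₂_le fun j hj => ?_)
  · rintro _ ⟨j, hj, rfl⟩
    exact Submodule.mem_iSup_of_mem j (Submodule.mem_iSup_of_mem hj ⟨1, rfl⟩)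
  · rintro _ ⟨c, rfl⟩
    rw [LinearMap.coe_single, ← mul_one c, ← smul_eq_mul, Pi.single_smul']
    exact Submodule.smul_mem _ c (Submodule.subset_span ⟨j, hj, rfl⟩)

theorem finrank_iInf_ker_proj [DivisionRing α] [Fintype ι] (s : Set ι) :
    finrank α ↥(⨅ i ∈ s, ker (proj i : (ι → α) →ₗ[α] α)) = sᶜ.ncard := by
  classical
  rw [(LinearMap.iInfKerProjEquiv α (fun _ => α) disjoint_compl_left (by simp)).finrank_eq,
    Module.finrank_pi, ← Nat.card_eq_fintype_card, Nat.card_coe_set_eq]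

theorem coordF_eq_iInf_ker_proj {N : ℕ} (χ : Fin N → ℤ) (p : ℤ) :
    coordF χ p = ⨅ j ∈ {j | p < χ j}, ker (proj j) := by
  have hcompl : {j | p < χ j} = {j | χ j ≤ p}ᶜ := by
    ext j
    simp
  rw [hcompl]
  exact span_single_one_eq_iInf_ker_proj {j | χ j ≤ p}

end CoordinateSubspaces

theorem Submodule.finrank_map_add_finrank_ker_of_le {K V W : Type*} [DivisionRing K]
    [AddCommGroup V] [Module K V] [AddCommGroup W] [Module K W] [FiniteDimensional K V]
    (f : V →ₗ[K] W) {U : Submodule K V} (h : ker f ≤ U) :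
    finrank K (U.map f) + finrank K (ker f) = finrank K U := by
  have := LinearMap.finrank_range_add_finrank_ker (f.domRestrict U)
  rwa [LinearMap.range_domRestrict, LinearMap.ker_domRestrict,
    (Submodule.comapSubtypeEquivOfLe h).finrank_eq] at this

theorem Set.ncard_diff_add_ncard_compl {ι : Type*} [Finite ι] {s t : Set ι} (h : s ⊆ t) :
    (t \ s).ncard + tᶜ.ncard = sᶜ.ncard := by
  rw [← compl_sdiff_compl]
  exact Set.ncard_sdiff_add_ncard_of_subset (Set.compl_subset_compl.2 h)

theorem Set.OrdConnected.eq_setOf_val_le_iff {n : ℕ} {L : Set (Fin (n + 1))} (hL : L.OrdConnected)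
    (h0 : ⟨0, n.succ_pos⟩ ∈ L) {K : ℕ} (hK : K < n) :
    L = {i : Fin (n + 1) | (i : ℕ) ≤ K} ↔ ⟨K, by omega⟩ ∈ L ∧ ⟨K + 1, by omega⟩ ∉ L := by
  constructor
  · rintro rfl
    simp
  · rintro ⟨hKL, hK1L⟩
    ext i
    refine ⟨fun hi => ?_, fun hi => hL.out h0 hKL ⟨Nat.zero_le _, hi⟩⟩
    by_contra hiK
    refine hK1L (hL.out hKL hi ⟨Fin.mk_le_mk.2 K.le_succ, Fin.mk_le_of_le_val ?_⟩)
    simp only [Set.mem_ofPred_eq, not_le] at hiK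
    exact hiK

theorem Set.OrdConnected.eq_univ_iff_last_mem {n : ℕ} {L : Set (Fin (n + 1))}
    (hL : L.OrdConnected) (h0 : ⟨0, n.succ_pos⟩ ∈ L) : L = Set.univ ↔ Fin.last n ∈ L :=
  ⟨fun h => h ▸ Set.mem_univ _,
    fun h => Set.eq_univ_of_forall fun i => hL.out h0 h ⟨Nat.zero_le _, Fin.le_last i⟩⟩

section Segmentation

variable {m' : ℕ} {d : Fin (m' + 1) → ℕ} {P : Set (Set (QOmega m' d))}

def SameSegment (P : Set (Set (QOmega m' d))) (x y : QOmega m' d) : Prop :=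
  ∃ S ∈ P, x ∈ S ∧ y ∈ S

theorem SameSegment.symm {x y : QOmega m' d} (h : SameSegment P x y) : SameSegment P y x :=
  let ⟨S, hS, hx, hy⟩ := h
  ⟨S, hS, hy, hx⟩

namespace IsSegmentation

variable (hP : IsSegmentation P)
include hP

theorem sameSegment_refl (x : QOmega m' d) : SameSegment P x x :=
  let ⟨S, ⟨hS, hx⟩, _⟩ := hP.2 x
  ⟨S, hS, hx, hx⟩

theorem mem_of_sameSegment {S : Set (QOmega m' d)} (hS : S ∈ P) {x y : QOmega m' d} (hx : x ∈ S)
    (h : SameSegment P x y) : y ∈ S := by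
  obtain ⟨T, hT, hxT, hyT⟩ := h
  obtain ⟨U, -, hU⟩ := hP.2 x
  rwa [hU S ⟨hS, hx⟩, ← hU T ⟨hT, hxT⟩]

theorem eq_setOf_sameSegment {S : Set (QOmega m' d)} (hS : S ∈ P) {x : QOmega m' d} (hx : x ∈ S) :
    S = {y | SameSegment P x y} :=
  Set.ext fun _ => ⟨fun hy => ⟨S, hS, hx, hy⟩, hP.mem_of_sameSegment hS hx⟩

theorem sameSegment_trans {x y z : QOmega m' d} (hxy : SameSegment P x y)
    (hyz : SameSegment P y z) : SameSegment P x z :=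
  let ⟨S, hS, hx, hy⟩ := hxy
  ⟨S, hS, hx, hP.mem_of_sameSegment hS hy hyz⟩

theorem eq_of_sameSegment {i : Fin (m' + 1)} {j j' : Fin (d i)} (h : SameSegment P ⟨i, j⟩ ⟨i, j'⟩) :
    j = j' :=
  let ⟨S, hS, hj, hj'⟩ := h
  (hP.1 S hS).2.1 i j j' hj hj'

theorem exists_sameSegment_of_le_of_le {i₁ i₂ : Fin (m' + 1)} {j₁ : Fin (d i₁)} {j₂ : Fin (d i₂)}
    (h : SameSegment P ⟨i₁, j₁⟩ ⟨i₂, j₂⟩) (i : Fin (m' + 1)) (h₁ : i₁ ≤ i) (h₂ : i ≤ i₂) :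
    ∃ j, SameSegment P ⟨i₁, j₁⟩ ⟨i, j⟩ ∧ SameSegment P ⟨i, j⟩ ⟨i₂, j₂⟩ := by
  obtain ⟨S, hS, hj₁, hj₂⟩ := h
  obtain ⟨j, hj⟩ := (hP.1 S hS).2.2 i₁ i₂ i ⟨j₁, hj₁⟩ ⟨j₂, hj₂⟩ h₁ h₂
  exact ⟨j, ⟨S, hS, hj₁, hj⟩, ⟨S, hS, hj, hj₂⟩⟩

theorem sameSegment_iff_mem {S : Set (QOmega m' d)} (hS : S ∈ P) {x : QOmega m' d} (hx : x ∈ S)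
    (y : QOmega m' d) : SameSegment P x y ↔ y ∈ S :=
  ⟨hP.mem_of_sameSegment hS hx, fun hy => ⟨S, hS, hx, hy⟩⟩

theorem exists_mem_and_iff {S : Set (QOmega m' d)} (hS : S ∈ P) {x : QOmega m' d} (hx : x ∈ S)
    {Q : Set (QOmega m' d) → Prop} : (∃ T ∈ P, x ∈ T ∧ Q T) ↔ Q S := by
  refine ⟨fun ⟨T, hT, hxT, hQT⟩ => ?_, fun hQS => ⟨S, hS, hx, hQS⟩⟩
  rwa [hP.eq_setOf_sameSegment hS hx, ← hP.eq_setOf_sameSegment hT hxT]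

theorem ordConnected_levelsOf {S : Set (QOmega m' d)} (hS : S ∈ P) : (levelsOf S).OrdConnected :=
  ⟨fun _ h₁ _ h₂ _ hi => (hP.1 S hS).2.2 _ _ _ h₁ h₂ hi.1 hi.2⟩

theorem ncard_setOf_mem_and (i₀ : Fin (m' + 1)) {Q : Set (QOmega m' d) → Prop}
    (hQ : ∀ S ∈ P, Q S → i₀ ∈ levelsOf S) :
    {S | S ∈ P ∧ Q S}.ncard = {j : Fin (d i₀) | ∃ S ∈ P, ⟨i₀, j⟩ ∈ S ∧ Q S}.ncard := by
  have himage : {S | S ∈ P ∧ Q S} =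
      (fun j => {y | SameSegment P ⟨i₀, j⟩ y}) '' {j | ∃ S ∈ P, ⟨i₀, j⟩ ∈ S ∧ Q S} := by
    ext S
    constructor
    · rintro ⟨hS, hQS⟩
      obtain ⟨j, hj⟩ := hQ S hS hQS
      exact ⟨j, ⟨S, hS, hj, hQS⟩, (hP.eq_setOf_sameSegment hS hj).symm⟩
    · rintro ⟨j, ⟨T, hT, hj, hQT⟩, rfl⟩
      simp only [← hP.eq_setOf_sameSegment hT hj]
      exact ⟨hT, hQT⟩
  rw [himage, Set.InjOn.ncard_image]
  intro j₁ _ j₂ _ h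
  exact hP.eq_of_sameSegment ((Set.ext_iff.1 h _).2 (hP.sameSegment_refl _))

end IsSegmentation

end Segmentation

section SegmentRepresentation

variable {m' : ℕ} {d : Fin (m' + 1) → ℕ} {P : Set (Set (QOmega m' d))}

theorem segRep_eq_indicatorMatrix (i : Fin m') :
    segRep P i = indicatorMatrix fun j' j => SameSegment P ⟨i.castSucc, j⟩ ⟨i.succ, j'⟩ := by
  ext j' j
  simp only [segRep, indicatorMatrix, SameSegment, of_apply]
  congr

theorem ker_qComp_le_ker_qComp_succ (f : QRep m' d) (K : ℕ) (hK : K < m') :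
    ker (toLin' (qComp f K hK.le)) ≤ ker (toLin' (qComp f (K + 1) hK)) := by
  rw [qComp, toLin'_mul]
  exact LinearMap.ker_le_ker_comp _ _

theorem qComp_segRep (hP : IsSegmentation P) (K : ℕ) (hK : K ≤ m') :
    qComp (segRep P) K hK = indicatorMatrix fun j' j =>
      SameSegment P ⟨⟨0, m'.succ_pos⟩, j⟩ ⟨⟨K, Nat.lt_succ_of_le hK⟩, j'⟩ := by
  induction K with
  | zero =>
    have hrel : (fun j' j => SameSegment P ⟨⟨0, m'.succ_pos⟩, j⟩ ⟨⟨0, Nat.lt_succ_of_le hK⟩, j'⟩) =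
        (· = ·) := by
      funext j' j
      exact propext ⟨fun h => (hP.eq_of_sameSegment h).symm, fun h => h ▸ hP.sameSegment_refl _⟩
    rw [hrel, indicatorMatrix_eq_one]
    rfl
  | succ K ih =>
    rw [qComp, ih]
    dsimp only
    rw [segRep_eq_indicatorMatrix, indicatorMatrix_mul]
    · simp only [Fin.castSucc_mk, Fin.succ_mk]
      congr 1
      funext j' j
      refine propext ⟨fun ⟨j₁, h₁, h₀⟩ => hP.sameSegment_trans h₀ h₁, fun h => ?_⟩
      obtain ⟨j₁, h₀, h₁⟩ := hP.exists_sameSegment_of_le_of_le h ⟨K, by omega⟩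
        (Fin.mk_le_mk.2 (Nat.zero_le K)) (Fin.mk_le_mk.2 K.le_succ)
      exact ⟨j₁, h₁, h₀⟩
    · simp only [Fin.castSucc_mk, Fin.succ_mk]
      exact fun j' _ j₁ j₂ h₁ _ h₂ _ => hP.eq_of_sameSegment (hP.sameSegment_trans h₁ h₂.symm)

end SegmentRepresentation

section Counting

variable {m' : ℕ} {d : Fin (m' + 1) → ℕ} {P : Set (Set (QOmega m' d))}

def reachSet (P : Set (Set (QOmega m' d))) (K : ℕ) (hK : K ≤ m') :
    Set (Fin (d ⟨0, m'.succ_pos⟩)) :=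
  {j | ∃ j', SameSegment P ⟨⟨0, m'.succ_pos⟩, j⟩ ⟨⟨K, Nat.lt_succ_of_le hK⟩, j'⟩}

def flavorAboveSet (P : Set (Set (QOmega m' d))) (χ : Fin (d (Fin.last m')) → ℤ) (p : ℤ) :
    Set (Fin (d ⟨0, m'.succ_pos⟩)) :=
  {j | ∃ j', p < χ j' ∧ SameSegment P ⟨⟨0, m'.succ_pos⟩, j⟩ ⟨⟨m', Nat.lt_succ_of_le le_rfl⟩, j'⟩}

theorem flavorAboveSet_subset_reachSet (χ : Fin (d (Fin.last m')) → ℤ) (p : ℤ) :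
    flavorAboveSet P χ p ⊆ reachSet P m' le_rfl :=
  fun _ ⟨j', _, h⟩ => ⟨j', h⟩

theorem IsSegmentation.mem_reachSet_iff (hP : IsSegmentation P) {S : Set (QOmega m' d)}
    (hS : S ∈ P) {j : Fin (d ⟨0, m'.succ_pos⟩)} (hj : ⟨⟨0, m'.succ_pos⟩, j⟩ ∈ S) (K : ℕ)
    (hK : K ≤ m') : j ∈ reachSet P K hK ↔ ⟨K, Nat.lt_succ_of_le hK⟩ ∈ levelsOf S :=
  exists_congr fun _ => hP.sameSegment_iff_mem hS hj _

theorem IsSegmentation.reachSet_succ_subset (hP : IsSegmentation P) (K : ℕ) (hK : K < m') :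
    reachSet P (K + 1) hK ⊆ reachSet P K hK.le := fun _ ⟨_, h⟩ =>
  let ⟨j₁, h₁, _⟩ := hP.exists_sameSegment_of_le_of_le h ⟨K, by omega⟩
    (Fin.mk_le_mk.2 (Nat.zero_le K)) (Fin.mk_le_mk.2 K.le_succ)
  ⟨j₁, h₁⟩

theorem IsSegmentation.ker_toLin'_qComp_segRep (hP : IsSegmentation P) (K : ℕ) (hK : K ≤ m') :
    ker (toLin' (qComp (segRep P) K hK)) = ⨅ j ∈ reachSet P K hK, ker (proj j) := by
  rw [qComp_segRep hP]
  exact ker_toLin'_indicatorMatrix fun _ _ _ h₁ h₂ =>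
    hP.eq_of_sameSegment (hP.sameSegment_trans h₁ h₂.symm)

theorem IsSegmentation.comap_toLin'_qComp_segRep_coordF (hP : IsSegmentation P)
    (χ : Fin (d (Fin.last m')) → ℤ) (p : ℤ) :
    (coordF χ p).comap (toLin' (qComp (segRep P) m' le_rfl)) =
      ⨅ j ∈ flavorAboveSet P χ p, ker (proj j) := by
  -- instantiated at `Fin.last m'`, the level of `χ`: unifying against the goal directly times out
  have := comap_toLin'_indicatorMatrix (α := ℂ) (m := Fin (d (Fin.last m')))
    (R := fun j' j => SameSegment P ⟨⟨0, m'.succ_pos⟩, j⟩ ⟨Fin.last m', j'⟩) (fun _ _ _ h₁ h₂ =>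
    hP.eq_of_sameSegment (hP.sameSegment_trans h₁ h₂.symm)) {j | p < χ j}
  rw [coordF_eq_iInf_ker_proj, qComp_segRep hP]
  exact this

theorem IsSegmentation.ncard_setOf_levelsOf_eq_setOf_le (hP : IsSegmentation P) (K : ℕ)
    (hK : K < m') :
    {S | S ∈ P ∧ levelsOf S = {i : Fin (m' + 1) | (i : ℕ) ≤ K}}.ncard =
      (reachSet P K hK.le \ reachSet P (K + 1) hK).ncard := by
  rw [hP.ncard_setOf_mem_and ⟨0, m'.succ_pos⟩]
  swap
  · rintro S - hS
    rw [hS]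
    exact Nat.zero_le K
  congr 1
  ext j
  obtain ⟨S, ⟨hS, hj⟩, -⟩ := hP.2 ⟨⟨0, m'.succ_pos⟩, j⟩
  rw [Set.mem_ofPred_eq, hP.exists_mem_and_iff hS hj,
    (hP.ordConnected_levelsOf hS).eq_setOf_val_le_iff ⟨j, hj⟩ hK, Set.mem_sdiff,
    hP.mem_reachSet_iff hS hj, hP.mem_reachSet_iff hS hj]

theorem IsSegmentation.ncard_setOf_levelsOf_eq_univ (hP : IsSegmentation P)
    (χ : Fin (d (Fin.last m')) → ℤ) (p : ℤ) :
    {S | S ∈ P ∧ levelsOf S = Set.univ ∧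
        ∃ j : Fin (d (Fin.last m')), (⟨Fin.last m', j⟩ : QOmega m' d) ∈ S ∧ χ j ≤ p}.ncard =
      (reachSet P m' le_rfl \ flavorAboveSet P χ p).ncard := by
  rw [hP.ncard_setOf_mem_and ⟨0, m'.succ_pos⟩]
  swap
  · rintro S - ⟨hS, -⟩
    rw [hS]
    trivial
  congr 1
  ext j
  obtain ⟨S, ⟨hS, hj⟩, -⟩ := hP.2 ⟨⟨0, m'.succ_pos⟩, j⟩
  rw [Set.mem_ofPred_eq, hP.exists_mem_and_iff hS hj,
    (hP.ordConnected_levelsOf hS).eq_univ_iff_last_mem ⟨j, hj⟩, Set.mem_sdiff,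
    hP.mem_reachSet_iff hS hj]
  simp only [flavorAboveSet, Set.mem_ofPred_eq, hP.sameSegment_iff_mem hS hj, not_exists, not_and]
  constructor
  · rintro ⟨hlast, j', hj', hχ⟩
    refine ⟨hlast, fun j'' hχ' hj'' => ?_⟩
    rw [(hP.1 S hS).2.1 _ j'' j' hj'' hj'] at hχ'
    exact hχ'.not_ge hχ
  · rintro ⟨⟨j', hj'⟩, hχ⟩
    exact ⟨⟨j', hj'⟩, j', hj', not_lt.1 fun h => hχ j' h hj'⟩

end Counting

open Matrix in
theorem segmentation_rank_counts_general (m' : ℕ) (d : Fin (m' + 1) → ℕ)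
    (χ : Fin (d (Fin.last m')) → ℤ)
    (P : Set (Set (QOmega m' d))) (hP : IsSegmentation P) :
    (∀ (K : ℕ) (hK : K < m'),
      Module.finrank ℂ
          ↥(Submodule.map (Matrix.toLin' (qComp (segRep P) K hK.le))
            (LinearMap.ker (Matrix.toLin' (qComp (segRep P) (K + 1) hK)))) =
        Set.ncard {S : Set (QOmega m' d) | S ∈ P ∧
          levelsOf S = {i : Fin (m' + 1) | (i : ℕ) ≤ K}}) ∧
    (∀ p : ℤ,
      Module.finrank ℂ
          ↥(Submodule.comap (Matrix.toLin' (qComp (segRep P) m' le_rfl)) (coordF χ p)) =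
        Module.finrank ℂ ↥(LinearMap.ker (Matrix.toLin' (qComp (segRep P) m' le_rfl))) +
          Set.ncard {S : Set (QOmega m' d) | S ∈ P ∧ levelsOf S = Set.univ ∧
            ∃ j : Fin (d (Fin.last m')), (⟨Fin.last m', j⟩ : QOmega m' d) ∈ S ∧ χ j ≤ p}) := by
  refine ⟨fun K hK => ?_, fun p => ?_⟩
  · have hrank := Submodule.finrank_map_add_finrank_ker_of_le _
      (ker_qComp_le_ker_qComp_succ (segRep P) K hK)
    have hcount := Set.ncard_diff_add_ncard_compl (hP.reachSet_succ_subset K hK)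
    rw [hP.ker_toLin'_qComp_segRep K, finrank_iInf_ker_proj, hP.ker_toLin'_qComp_segRep (K + 1),
      finrank_iInf_ker_proj] at hrank
    rw [hP.ker_toLin'_qComp_segRep (K + 1), hP.ncard_setOf_levelsOf_eq_setOf_le K hK]
    omega
  · have hcount := Set.ncard_diff_add_ncard_compl (flavorAboveSet_subset_reachSet (P := P) χ p)
    rw [hP.comap_toLin'_qComp_segRep_coordF, hP.ker_toLin'_qComp_segRep, finrank_iInf_ker_proj,
      finrank_iInf_ker_proj, hP.ncard_setOf_levelsOf_eq_univ]
    omega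

open Matrix in
/-- For the point `f_Σ` of a segmentation `Σ`: the rank of `f_{Σ,k;1}` restricted to
`ker f_{Σ,k+1;1}` counts the subsegments running from level `1` to level `k`, and the dimension
of `(f_{Σ,m;1})⁻¹(F_p)` exceeds `dim ker f_{Σ,m;1}` by the number of subsegments running from
level `1` to level `m` whose flavor is at most `p`. -/
theorem segmentation_rank_counts (m' : ℕ) (hm : 1 ≤ m') (d : Fin (m' + 1) → ℕ)
    (χ : Fin (d (Fin.last m')) → ℤ) (hχ : Monotone χ)
    (P : Set (Set (QOmega m' d))) (hP : IsSegmentation P) :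
    (∀ (K : ℕ) (hK : K < m'),
      Module.finrank ℂ
          ↥(Submodule.map (Matrix.toLin' (qComp (segRep P) K hK.le))
            (LinearMap.ker (Matrix.toLin' (qComp (segRep P) (K + 1) hK)))) =
        Set.ncard {S : Set (QOmega m' d) | S ∈ P ∧
          levelsOf S = {i : Fin (m' + 1) | (i : ℕ) ≤ K}}) ∧
    (∀ p : ℤ,
      Module.finrank ℂ
          ↥(Submodule.comap (Matrix.toLin' (qComp (segRep P) m' le_rfl)) (coordF χ p)) =
        Module.finrank ℂ ↥(LinearMap.ker (Matrix.toLin' (qComp (segRep P) m' le_rfl))) +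
          Set.ncard {S : Set (QOmega m' d) | S ∈ P ∧ levelsOf S = Set.univ ∧
            ∃ j : Fin (d (Fin.last m')), (⟨Fin.last m', j⟩ : QOmega m' d) ∈ S ∧ χ j ≤ p}) :=
  segmentation_rank_counts_general m' d χ P hP
end
end
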